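/- arXiv:1803.10868 — 2 statements merged into one kernel-verified Lean document; each statement's English description precedes it below -/
import Mathlib

section
/- Let n be a positive integer, let a₁, …, a_n be nonzero real numbers, and let u ∈ ℝ with u ≠ 0. Then the number of sign vectors ε ∈ {-1,1}^n satisfying ∑_{k=1}^{n} a_k ε_k = u is at most 2^n · P(n+1) = (1/2) · binom(n+1, ⌊(n+1)/2⌋). Equivalently, if ξ₁, …, ξ_n are independent uniform ±1 random variables, then ℙ(∑_{k=1}^{n} a_k ξ_k = u) ≤ P(n+1). -/
/-- `P n = 2^(-n) * binom(n, ⌊n/2⌋)`, the bound in the Littlewood–Offord lemma. -/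
noncomputable def littlewoodOffordBound (n : ℕ) : ℝ :=
  (2 : ℝ) ^ (-(n : ℤ)) * (n.choose (n / 2) : ℝ)

/-! Erdős: reading `ε` through the set of `k` with `a k ε k = |a k|` turns the solutions of
`∑ a k ε k = c` into sets `T` with `∑_{k ∈ T} |a k|` fixed, an antichain since no `a k`
vanishes; Sperner bounds it by `binom(n, ⌊n/2⌋)`. For a target `u ≠ 0` append the weight `-u`:
the solutions of `∑ a k ε k = u` and of `∑ a k ε k = -u` become the zero-sum sign vectors of
length `n + 1`, and `ε ↦ -ε` matches the two kinds, so twice their number is at most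
`binom(n+1, ⌊(n+1)/2⌋)`. -/

open Finset Function

theorem Finset.isAntichain_setOf_sum_eq {ι M : Type*} [AddCommMonoid M] [PartialOrder M]
    [IsOrderedCancelAddMonoid M] {w : ι → M} (hw : ∀ k, 0 < w k) (c : M) :
    IsAntichain (· ⊆ ·) {T : Finset ι | ∑ k ∈ T, w k = c} := by
  intro S hS T hT hne hST
  obtain ⟨i, hiT, hiS⟩ := exists_of_ssubset (hST.ssubset_of_ne hne)
  exact (sum_lt_sum_of_subset hST hiT hiS (hw i) fun j _ _ => (hw j).le).ne (hS.trans hT.symm)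

namespace LittlewoodOfford

variable {ι : Type*} [Fintype ι]

def signedSum (a : ι → ℝ) (ε : ι → Bool) : ℝ :=
  ∑ k, a k * if ε k then 1 else -1

theorem signedSum_not (a : ι → ℝ) (ε : ι → Bool) :
    signedSum a (fun k => !ε k) = -signedSum a ε := by
  simp only [signedSum, ← sum_neg_distrib]
  refine sum_congr rfl fun k _ => ?_
  rcases Bool.eq_false_or_eq_true (ε k) with h | h <;> simp [h]

theorem signedSum_cons {n : ℕ} (c : ℝ) (a : Fin n → ℝ) (t : Bool) (ε : Fin n → Bool) :
    signedSum (Fin.cons c a : Fin (n + 1) → ℝ) (Fin.cons t ε) =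
      (c * if t then 1 else -1) + signedSum a ε := by
  simp [signedSum, Fin.sum_univ_succ]

theorem card_signedSum_eq_neg (a : ι → ℝ) (c : ℝ) :
    Nat.card {ε // signedSum a ε = -c} = Nat.card {ε // signedSum a ε = c} :=
  Nat.card_congr <| (Equiv.piCongrRight fun _ => Equiv.boolNot).subtypeEquiv fun ε => by
    show _ ↔ signedSum a (fun k => !ε k) = c
    rw [signedSum_not, neg_eq_iff_eq_neg]

theorem card_signedSum_cons_neg_eq_zero {n : ℕ} (a : Fin n → ℝ) (u : ℝ) :
    Nat.card {η // signedSum (Fin.cons (-u) a : Fin (n + 1) → ℝ) η = 0} =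
      2 * Nat.card {ε // signedSum a ε = u} := by
  rw [two_mul]
  nth_rw 2 [← card_signedSum_eq_neg a u]
  calc Nat.card {η // signedSum (Fin.cons (-u) a : Fin (n + 1) → ℝ) η = 0}
      = Nat.card (Σ t : Bool, {ε // signedSum (Fin.cons (-u) a : Fin (n + 1) → ℝ)
          (Fin.cons t ε) = 0}) :=
        Nat.card_congr <| ((Fin.consEquiv fun _ => Bool).symm.subtypeEquiv fun η => by
          simp [Fin.consEquiv]).trans (Equiv.subtypeProdEquivSigmaSubtype _)
    _ = _ := by
        rw [Nat.card_sigma, Fintype.sum_bool]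
        simp only [signedSum_cons]
        congr 1 <;> refine Nat.card_congr (Equiv.subtypeEquivRight fun ε => ?_) <;>
          simp only [if_true, Bool.false_eq_true, if_false] <;> constructor <;> intro h <;> linarith

noncomputable def alignedSet (a : ι → ℝ) (ε : ι → Bool) : Finset ι :=
  {k | ε k = decide (0 < a k)}

theorem alignedSet_injective (a : ι → ℝ) : Injective (alignedSet a) := by
  intro ε ε' h
  funext k
  have hk : k ∈ alignedSet a ε ↔ k ∈ alignedSet a ε' := by rw [h]
  simp only [alignedSet, mem_filter, mem_univ, true_and] at hk
  revert hk
  cases ε k <;> cases ε' k <;> cases decide (0 < a k) <;> simp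

theorem signedSum_eq_two_mul_sum_alignedSet_sub (a : ι → ℝ) (ε : ι → Bool) :
    signedSum a ε = 2 * ∑ k ∈ alignedSet a ε, |a k| - ∑ k, |a k| := by
  classical
  have hterm : ∀ k, (a k * if ε k then 1 else -1) =
      (if k ∈ alignedSet a ε then 2 * |a k| else 0) - |a k| := by
    intro k
    simp only [alignedSet, mem_filter, mem_univ, true_and]
    rcases lt_trichotomy (a k) 0 with hk | hk | hk <;>
      rcases Bool.eq_false_or_eq_true (ε k) with h | h <;>
      simp [h, hk, abs_of_neg, abs_of_pos, hk.le] <;> ring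
  rw [signedSum, sum_congr rfl fun k _ => hterm k, sum_sub_distrib, sum_ite_mem, univ_inter,
    mul_sum]

theorem card_signedSum_eq_le_choose {a : ι → ℝ} (ha : ∀ k, a k ≠ 0) (c : ℝ) :
    Nat.card {ε // signedSum a ε = c} ≤ (Fintype.card ι).choose (Fintype.card ι / 2) := by
  classical
  set 𝒜 : Finset (Finset ι) := {T | ∑ k ∈ T, |a k| = (c + ∑ k, |a k|) / 2}
  have h𝒜 : IsAntichain (· ⊆ ·) (𝒜 : Set (Finset ι)) := by
    simpa [𝒜] using isAntichain_setOf_sum_eq (fun k => abs_pos.2 (ha k)) _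
  calc Nat.card {ε // signedSum a ε = c} = #{ε | signedSum a ε = c} := by
        rw [Nat.card_eq_fintype_card, Fintype.card_subtype]
    _ ≤ #𝒜 := by
        refine card_le_card_of_injOn (alignedSet a) (fun ε hε => ?_)
          (alignedSet_injective a).injOn
        simp only [𝒜, coe_filter, mem_univ, true_and, Set.mem_ofPred_eq,
          signedSum_eq_two_mul_sum_alignedSet_sub] at hε ⊢
        linarith
    _ ≤ _ := h𝒜.sperner

end LittlewoodOfford

open LittlewoodOfford

theorem littlewood_offord_nonzero_target_general (n : ℕ) (a : Fin n → ℝ)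
    (ha : ∀ k, a k ≠ 0) (u : ℝ) (hu : u ≠ 0) :
    (Nat.card {ε : Fin n → Bool //
        (∑ k, a k * (if ε k then (1 : ℝ) else -1)) = u} : ℝ) ≤
      (1 / 2 : ℝ) * ((n + 1).choose ((n + 1) / 2) : ℝ) ∧
    (Nat.card {ε : Fin n → Bool //
        (∑ k, a k * (if ε k then (1 : ℝ) else -1)) = u} : ℝ) / 2 ^ n ≤
      littlewoodOffordBound (n + 1) := by
  have hb : ∀ k, (Fin.cons (-u) a : Fin (n + 1) → ℝ) k ≠ 0 :=
    Fin.cases (neg_ne_zero.2 hu) ha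
  have key : 2 * Nat.card {ε // signedSum a ε = u} ≤ (n + 1).choose ((n + 1) / 2) := by
    simpa only [card_signedSum_cons_neg_eq_zero, Fintype.card_fin] using
      card_signedSum_eq_le_choose hb 0
  have hhalf :
      (Nat.card {ε // signedSum a ε = u} : ℝ) ≤ 1 / 2 * (n + 1).choose ((n + 1) / 2) := by
    have : 2 * (Nat.card {ε // signedSum a ε = u} : ℝ) ≤ (n + 1).choose ((n + 1) / 2) := by
      exact_mod_cast key
    linarith
  have hbound : littlewoodOffordBound (n + 1) =
      1 / 2 * ((n + 1).choose ((n + 1) / 2) : ℝ) / 2 ^ n := by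
    rw [littlewoodOffordBound, zpow_neg, zpow_natCast, pow_succ]
    field_simp
  exact ⟨hhalf, hbound ▸ div_le_div_of_nonneg_right hhalf (by positivity)⟩

theorem littlewood_offord_nonzero_target (n : ℕ) (hn : 1 ≤ n) (a : Fin n → ℝ)
    (ha : ∀ k, a k ≠ 0) (u : ℝ) (hu : u ≠ 0) :
    (Nat.card {ε : Fin n → Bool //
        (∑ k, a k * (if ε k then (1 : ℝ) else -1)) = u} : ℝ) ≤
      (1 / 2 : ℝ) * ((n + 1).choose ((n + 1) / 2) : ℝ) ∧
    (Nat.card {ε : Fin n → Bool //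
        (∑ k, a k * (if ε k then (1 : ℝ) else -1)) = u} : ℝ) / 2 ^ n ≤
      littlewoodOffordBound (n + 1) :=
  littlewood_offord_nonzero_target_general n a ha u hu
end

section
/- Let n > 1 and let S be a finite subset of ℝ^n. For any integer degree d with 1 < d ≤ n, the number of distinct functions f : S → {-1,1} of the form f(x) = sgn(p(x)), where p is a real polynomial in n variables of total degree at most d with no zeros on S, is at most 2 · binom(|S|−1, ≤ m−1), where m = binom(n+d, d) is the number of monomials of degree at most d in n variables (including the constant term). -/
/-!
Sign patterns of an `r`-dimensional space `W` of real functions on a finite set `T` are counted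
by induction on `|T|` (Cover's function-counting argument). Remove a point `a` from `T`: a pattern
on the remaining points extends to `a` in at most two ways, and when it extends in both ways the
two witnesses, combined with positive weights, give a witness vanishing at `a`. So the pattern is
realised by `W ∩ {v | v a = 0}`, of dimension `< r`, and the counts satisfy
`N(T, r) ≤ N(T - a, r) + N(T - a, r - 1)`, which is Pascal's rule for `2 ∑_{i<r} C(|T|-1, i)`.
Polynomials of total degree at most `d`, evaluated on `S`, form such a space of dimension at most
`C(n+d, d)`.
-/

open Finset Module

namespace MvPolynomial

theorem finrank_restrictTotalDegree_le (σ : Type*) [Finite σ] (R : Type*) [CommRing R]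
    [Nontrivial R] (d : ℕ) :
    finrank R (restrictTotalDegree σ R d) ≤ (Nat.card σ + d).choose d := by
  classical
  set s : Set (σ →₀ ℕ) := {t | (t.sum fun _ e => e) ≤ d}
  -- homogenization: a monomial of degree at most `d` gets a new variable of exponent `d - deg`
  let homogenize : s → Sym (Option σ) d := fun t => (Sym.equivNatSum (Option σ) d).symm
    ⟨t.1.optionElim (d - t.1.sum fun _ e => e), by
      rw [Finsupp.sum_option_index _ _ (fun _ => rfl) (fun _ _ _ => rfl)]
      simp only [id, Finsupp.optionElim_apply_none, Finsupp.some_optionElim]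
      exact Nat.sub_add_cancel t.2⟩
  have h_inj : Function.Injective homogenize := fun t u h => Subtype.ext <| by
    simpa [homogenize] using congrArg (fun P => (Sym.equivNatSum (Option σ) d P).1.some) h
  calc finrank R (restrictTotalDegree σ R d) = Nat.card s :=
        finrank_eq_nat_card_basis (basisRestrictSupport R s)
    _ ≤ Nat.card (Sym (Option σ) d) := Nat.card_le_card_of_injective _ h_inj
    _ = (Nat.card σ + d).choose d := by
        rw [Sym.natCard_sym_eq_choose, Finite.card_option, Nat.add_right_comm, Nat.add_sub_cancel]

end MvPolynomial

namespace Real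

theorem sign_eq_one_iff {r : ℝ} : sign r = 1 ↔ 0 < r := by
  refine ⟨fun h => ?_, sign_of_pos⟩
  by_contra! hr
  rcases hr.lt_or_eq with hr | rfl
  · norm_num [sign_of_neg hr] at h
  · norm_num at h

theorem sign_eq_neg_one_iff {r : ℝ} : sign r = -1 ↔ r < 0 := by
  rw [← neg_inj, ← sign_neg, neg_neg, sign_eq_one_iff, neg_pos]

theorem sign_add_of_sign_eq {x y a b : ℝ} (ha : 0 < a) (hb : 0 < b) (hx : x ≠ 0)
    (hxy : sign x = sign y) : sign (a * x + b * y) = sign x := by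
  rcases hx.lt_or_gt with hx | hx
  · have hy : y < 0 := sign_eq_neg_one_iff.mp (hxy ▸ sign_of_neg hx)
    rw [sign_of_neg hx, sign_of_neg (by nlinarith)]
  · have hy : 0 < y := sign_eq_one_iff.mp (hxy ▸ sign_of_pos hx)
    rw [sign_of_pos hx, sign_of_pos (by nlinarith)]

end Real

theorem Nat.sum_range_succ_choose_succ (k m : ℕ) :
    ∑ i ∈ range (m + 1), (k + 1).choose i =
      ∑ i ∈ range (m + 1), k.choose i + ∑ i ∈ range m, k.choose i := by
  rw [sum_range_succ' _ m, sum_range_succ' (fun i => k.choose i) m]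
  simp only [Nat.choose_succ_succ', sum_add_distrib, Nat.choose_zero_right]
  ring

section SignPatterns

variable {X : Type*}

/-- Patterns are extended by `0` off `T`, so that patterns on different sets share one type. -/
def signPatterns (W : Submodule ℝ (X → ℝ)) (T : Finset X) : Set (X → ℝ) :=
  {f | ∃ v ∈ W, (∀ x ∈ T, v x ≠ 0) ∧ (T : Set X).indicator (fun x => Real.sign (v x)) = f}

variable {W : Submodule ℝ (X → ℝ)} {T : Finset X} {f : X → ℝ}

theorem apply_eq_zero_of_mem_signPatterns (hf : f ∈ signPatterns W T) {x : X} (hx : x ∉ T) :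
    f x = 0 := by
  obtain ⟨v, -, -, rfl⟩ := hf
  exact Set.indicator_of_notMem hx _

theorem apply_eq_one_or_neg_one_of_mem_signPatterns (hf : f ∈ signPatterns W T) {x : X}
    (hx : x ∈ T) : f x = 1 ∨ f x = -1 := by
  obtain ⟨v, -, hv, rfl⟩ := hf
  rw [Set.indicator_of_mem (mem_coe.mpr hx)]
  exact (Real.sign_apply_eq_of_ne_zero _ (hv x hx)).symm

theorem encard_signPatterns_empty_le (W : Submodule ℝ (X → ℝ)) :
    (signPatterns W ∅).encard ≤ 1 := by
  refine Set.encard_le_one_iff.mpr ?_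
  rintro _ _ ⟨v, -, -, rfl⟩ ⟨w, -, -, rfl⟩
  simp

theorem mapsTo_indicator_signPatterns {U : Finset X} (hTU : T ⊆ U) :
    Set.MapsTo (Set.indicator (T : Set X)) (signPatterns W U) (signPatterns W T) := by
  rintro _ ⟨v, hv, hv0, rfl⟩
  refine ⟨v, hv, fun x hx => hv0 x (hTU hx), ?_⟩
  rw [Set.indicator_indicator, Set.inter_eq_left.mpr (coe_subset.mpr hTU)]

theorem injOn_indicator_signPatterns_cons {a : X} (ha : a ∉ T) (c : ℝ) :
    Set.InjOn (Set.indicator (T : Set X)) (signPatterns W (T.cons a ha) ∩ {f | f a = c}) := by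
  rintro f ⟨hf, hfa⟩ g ⟨hg, hga⟩ hfg
  funext x
  by_cases hxT : x ∈ T
  · simpa [Set.indicator_of_mem (mem_coe.mpr hxT)] using congrFun hfg x
  by_cases hxa : x = a
  · subst hxa
    exact hfa.trans hga.symm
  have hx : x ∉ T.cons a ha := by simp [hxa, hxT]
  rw [apply_eq_zero_of_mem_signPatterns hf hx, apply_eq_zero_of_mem_signPatterns hg hx]

theorem indicator_mem_signPatterns_inf_ker {a : X} {ha : a ∉ T} {g : X → ℝ}
    (hf : f ∈ signPatterns W (T.cons a ha)) (hfa : f a = 1)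
    (hg : g ∈ signPatterns W (T.cons a ha)) (hga : g a = -1)
    (hfg : (T : Set X).indicator f = (T : Set X).indicator g) :
    (T : Set X).indicator f ∈ signPatterns (W ⊓ LinearMap.ker (LinearMap.proj a)) T := by
  obtain ⟨v, hv, hv0, rfl⟩ := hf
  obtain ⟨w, hw, -, rfl⟩ := hg
  have hva : 0 < v a := by simpa [Real.sign_eq_one_iff] using hfa
  have hwa : w a < 0 := by simpa [Real.sign_eq_neg_one_iff] using hga
  set u : X → ℝ := (-w a) • v + v a • w
  have hu : ∀ x ∈ T, Real.sign (u x) = Real.sign (v x) := by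
    intro x hx
    have hx' : x ∈ T.cons a ha := mem_cons_of_mem hx
    have hvw := congrFun hfg x
    simp only [Set.indicator_of_mem (mem_coe.mpr hx), Set.indicator_of_mem (mem_coe.mpr hx')]
      at hvw
    exact Real.sign_add_of_sign_eq (neg_pos.mpr hwa) hva (hv0 x hx') hvw
  refine ⟨u, Submodule.mem_inf.mpr ⟨W.add_mem (W.smul_mem _ hv) (W.smul_mem _ hw), ?_⟩,
    fun x hx hux => hv0 x (mem_cons_of_mem hx) ?_, ?_⟩
  · simp only [u, LinearMap.mem_ker, LinearMap.proj_apply, Pi.add_apply, Pi.smul_apply,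
      smul_eq_mul]
    ring
  · rw [← Real.sign_eq_zero_iff, ← hu x hx, hux, Real.sign_zero]
  · rw [Set.indicator_indicator, Set.inter_eq_left.mpr (by simp)]
    exact Set.indicator_congr fun x hx => hu x hx

theorem encard_signPatterns_cons_le (W : Submodule ℝ (X → ℝ)) {a : X} (ha : a ∉ T) :
    (signPatterns W (T.cons a ha)).encard ≤ (signPatterns W T).encard +
      (signPatterns (W ⊓ LinearMap.ker (LinearMap.proj a)) T).encard := by
  set P := signPatterns W (T.cons a ha)
  set r := Set.indicator (M := ℝ) (T : Set X)
  set Ppos := P ∩ {f | f a = 1}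
  set Pneg := P ∩ {f | f a = -1}
  have hP : P ⊆ Ppos ∪ Pneg := fun f hf =>
    (apply_eq_one_or_neg_one_of_mem_signPatterns hf (mem_cons_self a T)).imp (⟨hf, ·⟩) (⟨hf, ·⟩)
  have hr : Set.MapsTo r P (signPatterns W T) := mapsTo_indicator_signPatterns (subset_cons ha)
  have hunion : r '' Ppos ∪ r '' Pneg ⊆ signPatterns W T :=
    Set.union_subset (hr.mono_left Set.inter_subset_left).image_subset
      (hr.mono_left Set.inter_subset_left).image_subset
  have hinter :
      r '' Ppos ∩ r '' Pneg ⊆ signPatterns (W ⊓ LinearMap.ker (LinearMap.proj a)) T := by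
    rintro _ ⟨⟨f, ⟨hf, hfa⟩, rfl⟩, ⟨g, ⟨hg, hga⟩, hgf⟩⟩
    exact indicator_mem_signPatterns_inf_ker hf hfa hg hga hgf.symm
  calc P.encard ≤ Ppos.encard + Pneg.encard :=
        (Set.encard_le_encard hP).trans (Set.encard_union_le _ _)
    _ = (r '' Ppos).encard + (r '' Pneg).encard := by
        rw [(injOn_indicator_signPatterns_cons ha 1).encard_image,
          (injOn_indicator_signPatterns_cons ha (-1)).encard_image]
    _ = (r '' Ppos ∪ r '' Pneg).encard + (r '' Ppos ∩ r '' Pneg).encard :=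
        (Set.encard_union_add_encard_inter _ _).symm
    _ ≤ _ := add_le_add (Set.encard_le_encard hunion) (Set.encard_le_encard hinter)

theorem finrank_inf_ker_proj_lt (W : Submodule ℝ (X → ℝ)) [FiniteDimensional ℝ W] {a : X}
    (ha : a ∈ T) (hW : (signPatterns W T).Nonempty) :
    finrank ℝ (W ⊓ LinearMap.ker (LinearMap.proj a) : Submodule ℝ (X → ℝ)) < finrank ℝ W := by
  obtain ⟨_, v, hv, hv0, -⟩ := hW
  exact Submodule.finrank_lt_finrank_of_lt (inf_lt_left.mpr fun hle => hv0 a ha (hle hv))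

theorem encard_signPatterns_le_of_nonempty (W : Submodule ℝ (X → ℝ)) [FiniteDimensional ℝ W]
    (hT : T.Nonempty) {m : ℕ} (hm : finrank ℝ W ≤ m) :
    (signPatterns W T).encard ≤ ↑(2 * ∑ i ∈ range m, (#T - 1).choose i) := by
  induction hT using Finset.Nonempty.cons_induction generalizing W m with
  | singleton a =>
    obtain hP | hP := (signPatterns W {a}).eq_empty_or_nonempty
    · simp [hP]
    obtain ⟨m, rfl⟩ := Nat.exists_eq_succ_of_ne_zero
      ((finrank_inf_ker_proj_lt W (mem_singleton_self a) hP).trans_le hm).ne_bot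
    have h := encard_signPatterns_cons_le W (notMem_empty a)
    rw [cons_empty] at h
    calc _ ≤ 1 + 1 := h.trans (add_le_add (encard_signPatterns_empty_le _)
          (encard_signPatterns_empty_le _))
      _ = _ := by simp [sum_range_succ', one_add_one_eq_two]
  | cons a T ha hT ih =>
    obtain hP | hP := (signPatterns W (T.cons a ha)).eq_empty_or_nonempty
    · simp [hP]
    have hlt := (finrank_inf_ker_proj_lt W (mem_cons_self a T) hP).trans_le hm
    obtain ⟨m, rfl⟩ := Nat.exists_eq_succ_of_ne_zero hlt.ne_bot
    obtain ⟨k, hk⟩ := Nat.exists_eq_succ_of_ne_zero hT.card_pos.ne'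
    calc _ ≤ _ := encard_signPatterns_cons_le W ha
      _ ≤ ↑(2 * ∑ i ∈ range (m + 1), k.choose i) + ↑(2 * ∑ i ∈ range m, k.choose i) := by
          gcongr
          · simpa [hk] using ih W hm
          · simpa [hk] using ih _ (Nat.lt_succ_iff.mp hlt)
      _ = _ := by
          rw [card_cons, hk, Nat.add_sub_cancel, Nat.sum_range_succ_choose_succ]
          push_cast
          ring

theorem encard_signPatterns_le (W : Submodule ℝ (X → ℝ)) [FiniteDimensional ℝ W] (T : Finset X)
    {m : ℕ} (hm : finrank ℝ W ≤ m) (hm_pos : 0 < m) :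
    (signPatterns W T).encard ≤ ↑(2 * ∑ i ∈ range m, (#T - 1).choose i) := by
  obtain rfl | hT := T.eq_empty_or_nonempty
  · obtain ⟨m, rfl⟩ := Nat.exists_eq_succ_of_ne_zero hm_pos.ne'
    refine (encard_signPatterns_empty_le W).trans ?_
    simp [sum_range_succ']
  · exact encard_signPatterns_le_of_nonempty W hT hm

end SignPatterns

theorem polynomial_set_capacity_general (n d : ℕ) (S : Set (Fin n → ℝ)) (hfin : S.Finite) :
    Nat.card {f : S → ℝ // ∃ p : MvPolynomial (Fin n) ℝ, p.totalDegree ≤ d ∧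
        ∀ x : S, MvPolynomial.eval (x : Fin n → ℝ) p ≠ 0 ∧
          f x = Real.sign (MvPolynomial.eval (x : Fin n → ℝ) p)} ≤
      2 * ∑ i ∈ Finset.range ((n + d).choose d), (S.ncard - 1).choose i := by
  have := hfin.fintype
  let W := (MvPolynomial.restrictTotalDegree (Fin n) ℝ d).map
    (LinearMap.pi fun x : S => (MvPolynomial.aeval (x : Fin n → ℝ)).toLinearMap)
  have hW : finrank ℝ W ≤ (n + d).choose d := (Submodule.finrank_map_le _ _).trans <| by
    simpa using MvPolynomial.finrank_restrictTotalDegree_le (Fin n) ℝ d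
  have hbound := encard_signPatterns_le W univ hW (Nat.choose_pos le_add_self)
  rw [card_univ, Fintype.card_eq_nat_card, Nat.card_coe_set_eq] at hbound
  refine (Nat.card_coe_set_eq _).trans_le
    (ENat.toNat_le_of_le_natCast ((Set.encard_le_encard ?_).trans hbound))
  rintro f ⟨p, hp, hf⟩
  refine ⟨_, Submodule.mem_map_of_mem ((MvPolynomial.mem_restrictTotalDegree _ _ _).mpr hp),
    fun x _ => by simpa using (hf x).1, ?_⟩
  ext x
  simp [(hf x).2]

theorem polynomial_set_capacity (n d : ℕ) (hn : 1 < n) (hd : 1 < d) (hdn : d ≤ n)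
    (S : Set (Fin n → ℝ)) (hfin : S.Finite) :
    Nat.card {f : S → ℝ // ∃ p : MvPolynomial (Fin n) ℝ, p.totalDegree ≤ d ∧
        ∀ x : S, MvPolynomial.eval (x : Fin n → ℝ) p ≠ 0 ∧
          f x = Real.sign (MvPolynomial.eval (x : Fin n → ℝ) p)} ≤
      2 * ∑ i ∈ Finset.range ((n + d).choose d), (S.ncard - 1).choose i :=
  polynomial_set_capacity_general n d S hfin
end
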